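/- The suboptimal two-impulse strategy (first choose the smallest Δv₁ along v_A - v⁻ satisfying the encounter constraint, then set Δv₂ = v⁺ - (v⁻ + Δv₁)) has cost at least the optimal two-impulse cost, and strict inequality can occur: there exist v⁻, v⁺, v_A ∈ ℝ³ and c > 0 for which the suboptimal cost strictly exceeds the optimal cost. -/
import Mathlib

/-- Optimal two-impulse flyby cost. -/
noncomputable def optCost (vminus vplus vA : EuclideanSpace ℝ (Fin 3)) (c : ℝ) : ℝ :=
  sInf {J : ℝ | ∃ d1 d2 : EuclideanSpace ℝ (Fin 3),
    ‖vminus + d1 - vA‖ ≤ c ∧ vminus + d1 + d2 = vplus ∧ J = ‖d1‖ + ‖d2‖}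

/-- Suboptimal cost: first take the smallest impulse along `v_A - v⁻`
satisfying the encounter constraint, then match `v⁺`. -/
noncomputable def subCost (vminus vplus vA : EuclideanSpace ℝ (Fin 3)) (c : ℝ) : ℝ :=
  ‖(1 - c / ‖vA - vminus‖) • (vA - vminus)‖ +
    ‖vplus - (vminus + (1 - c / ‖vA - vminus‖) • (vA - vminus))‖

noncomputable def v3 (a b c : ℝ) : EuclideanSpace ℝ (Fin 3) :=
  (WithLp.equiv 2 (Fin 3 → ℝ)).symm ![a,b,c]

lemma v3_norm (a b c : ℝ) : ‖v3 a b c‖ = Real.sqrt (a^2+b^2+c^2) := by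
  rw [EuclideanSpace.norm_eq]
  simp [v3, Fin.sum_univ_three, Real.norm_eq_abs, sq_abs]

lemma optCost_le_pair (vm vp vA : EuclideanSpace ℝ (Fin 3)) (c : ℝ)
    (d1 d2 : EuclideanSpace ℝ (Fin 3)) (h1 : ‖vm + d1 - vA‖ ≤ c)
    (h2 : vm + d1 + d2 = vp) : optCost vm vp vA c ≤ ‖d1‖ + ‖d2‖ := by
  apply csInf_le
  · refine ⟨0, ?_⟩
    rintro J ⟨a, b, -, -, rfl⟩
    positivity
  · exact ⟨d1, d2, h1, h2, rfl⟩

/-- The suboptimal strategy costs at least the optimal one, and the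
inequality can be strict. -/
theorem stmt3 :
    (∀ (vminus vplus vA : EuclideanSpace ℝ (Fin 3)) (c : ℝ), 0 < c → c < ‖vA - vminus‖ →
      optCost vminus vplus vA c ≤ subCost vminus vplus vA c) ∧
    (∃ (vminus vplus vA : EuclideanSpace ℝ (Fin 3)) (c : ℝ), 0 < c ∧ c < ‖vA - vminus‖ ∧
      optCost vminus vplus vA c < subCost vminus vplus vA c) := by
  constructor
  · intro vm vp vA c hc hlt
    have hw : (0:ℝ) < ‖vA - vm‖ := hc.trans hlt
    set d1 : EuclideanSpace ℝ (Fin 3) := (1 - c / ‖vA - vm‖) • (vA - vm) with hd1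
    have key : ‖vm + d1 - vA‖ ≤ c := by
      have h : vm + d1 - vA = (-(c / ‖vA - vm‖)) • (vA - vm) := by
        rw [hd1]; module
      rw [h, norm_smul, Real.norm_eq_abs, abs_neg,
        abs_of_nonneg (div_nonneg hc.le hw.le), div_mul_cancel₀ _ hw.ne']
    have := optCost_le_pair vm vp vA c d1 (vp - (vm + d1)) key (by abel)
    simpa [subCost, hd1] using this
  · refine ⟨0, v3 0 4 0, v3 2 0 0, 1, one_pos, ?_, ?_⟩
    · rw [sub_zero, v3_norm]
      rw [show (2:ℝ)^2 + 0^2 + 0^2 = 2^2 by ring, Real.sqrt_sq (by norm_num)]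
      norm_num
    · have hsub : subCost 0 (v3 0 4 0) (v3 2 0 0) 1 = 1 + Real.sqrt 17 := by
        unfold subCost
        rw [sub_zero, v3_norm,
          show (2:ℝ)^2 + 0^2 + 0^2 = 2^2 by ring, Real.sqrt_sq (by norm_num)]
        have e1 : ((1:ℝ) - 1 / 2) • v3 2 0 0 = v3 1 0 0 := by
          ext i; fin_cases i <;> simp [v3] <;> norm_num
        have e2 : v3 0 4 0 - ((0:EuclideanSpace ℝ (Fin 3)) + v3 1 0 0) = v3 (-1) 4 0 := by
          ext i; fin_cases i <;> simp [v3]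
        rw [e1, e2, v3_norm, v3_norm]
        norm_num
      have hopt : optCost 0 (v3 0 4 0) (v3 2 0 0) 1 ≤ Real.sqrt (9/5) + Real.sqrt 13 := by
        have h1 : ‖(0:EuclideanSpace ℝ (Fin 3)) + v3 (6/5) (3/5) 0 - v3 2 0 0‖ ≤ 1 := by
          have e : (0:EuclideanSpace ℝ (Fin 3)) + v3 (6/5) (3/5) 0 - v3 2 0 0
              = v3 (-4/5) (3/5) 0 := by
            ext i; fin_cases i <;> simp [v3] <;> norm_num
          rw [e, v3_norm, show ((-4)/5:ℝ)^2 + (3/5)^2 + 0^2 = 1^2 by ring,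
            Real.sqrt_sq (by norm_num)]
        have h2 : (0:EuclideanSpace ℝ (Fin 3)) + v3 (6/5) (3/5) 0 + v3 (-6/5) (17/5) 0
            = v3 0 4 0 := by
          ext i; fin_cases i <;> simp [v3] <;> norm_num
        have := optCost_le_pair 0 (v3 0 4 0) (v3 2 0 0) 1 _ _ h1 h2
        rw [v3_norm, v3_norm] at this
        convert this using 3 <;> norm_num
      rw [hsub]
      refine lt_of_le_of_lt hopt ?_
      have a1 : Real.sqrt (9/5) < 27/20 := by
        rw [show (27:ℝ)/20 = Real.sqrt ((27/20)^2) by rw [Real.sqrt_sq (by norm_num)]]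
        exact Real.sqrt_lt_sqrt (by norm_num) (by norm_num)
      have a2 : Real.sqrt 13 < 361/100 := by
        rw [show (361:ℝ)/100 = Real.sqrt ((361/100)^2) by rw [Real.sqrt_sq (by norm_num)]]
        exact Real.sqrt_lt_sqrt (by norm_num) (by norm_num)
      have a3 : (412:ℝ)/100 < Real.sqrt 17 := by
        rw [show (412:ℝ)/100 = Real.sqrt ((412/100)^2) by rw [Real.sqrt_sq (by norm_num)]]
        exact Real.sqrt_lt_sqrt (by norm_num) (by norm_num)
      linarith
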